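/- Let m > 0 be a real number and let σ ∈ {+1, −1}. The map k ↦ z_{−m}(k) = −m(1 + k²)/(1 − k²) is a bijection from the open quarter-plane {k ∈ ℂ : Re(k) > 0 and σ·Im(k) > 0} onto the open half-plane {z ∈ ℂ : σ·Im(z) < 0}. In particular, every z with Im(z) > 0 equals z_{−m}(k) for a unique k with Re(k) > 0 and Im(k) < 0. -/

import Mathlib

/-! The map factors as `k ↦ k²` followed by the Möbius transformation
`w ↦ -m(1 + w)/(1 - w)`. Squaring maps the quarter-plane `{Re k > 0, σ·Im k > 0}` bijectively
onto the half-plane `{σ·Im w > 0}`, since `Im (k²) = 2 Re k Im k` and every `w` off the real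
axis has exactly one square root with positive real part. The Möbius map has the inverse
`z ↦ (z + m)/(z - m)`, and for `m > 0` both reverse the sign of the imaginary part, e.g.
`Im (-m(1 + w)/(1 - w)) = -2m Im w / |1 - w|²`. -/

open Complex Set

lemma Set.BijOn.existsUnique_eq {α β : Type*} {f : α → β} {s : Set α} {t : Set β}
    (h : BijOn f s t) {b : β} (hb : b ∈ t) : ∃! a, a ∈ s ∧ b = f a := by
  obtain ⟨a, ha, rfl⟩ := h.surjOn hb
  exact ⟨a, ⟨ha, rfl⟩, fun a' ⟨ha', hfa⟩ => h.injOn ha' ha hfa.symm⟩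

lemma Complex.im_sq (k : ℂ) : (k ^ 2).im = 2 * k.re * k.im := by
  rw [sq, mul_im]
  ring

theorem bijOn_sq_quarterPlane (σ : ℝ) :
    BijOn (fun k : ℂ => k ^ 2) {k | 0 < k.re ∧ 0 < σ * k.im} {w | 0 < σ * w.im} := by
  refine ⟨fun k ⟨hre, him⟩ => ?_, fun k₁ ⟨hre₁, _⟩ k₂ ⟨hre₂, _⟩ h => ?_, fun w hw => ?_⟩
  · change 0 < σ * (k ^ 2).im
    rw [im_sq]
    nlinarith [mul_pos hre him]
  · rcases sq_eq_sq_iff_eq_or_eq_neg.mp h with h | h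
    · exact h
    · have := congrArg re h
      rw [neg_re] at this
      linarith
  · change 0 < σ * w.im at hw
    obtain ⟨k, rfl⟩ := IsAlgClosed.exists_pow_nat_eq w two_pos
    rw [im_sq] at hw
    have hre : k.re ≠ 0 := by
      rintro h
      simp [h] at hw
    rcases hre.lt_or_gt with hneg | hpos
    · refine ⟨-k, ⟨by simpa using hneg, ?_⟩, neg_sq k⟩
      rw [neg_im]
      nlinarith
    · exact ⟨k, ⟨hpos, by nlinarith⟩, rfl⟩

lemma im_neg_mul_one_add_div_one_sub (m : ℝ) (w : ℂ) :
    (-(m : ℂ) * (1 + w) / (1 - w)).im = -2 * m * w.im / normSq (1 - w) := by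
  simp only [div_im, normSq_apply, mul_re, mul_im, neg_re, neg_im, ofReal_re, ofReal_im,
    add_re, add_im, sub_re, sub_im, one_re, one_im]
  ring

lemma im_add_div_sub (m : ℝ) (z : ℂ) :
    ((z + m) / (z - m)).im = -2 * m * z.im / normSq (z - m) := by
  simp only [div_im, normSq_apply, add_re, add_im, sub_re, sub_im, ofReal_re, ofReal_im]
  ring

theorem bijOn_neg_mul_one_add_div_one_sub_halfPlane (m σ : ℝ) (hm : 0 < m) :
    BijOn (fun w : ℂ => -(m : ℂ) * (1 + w) / (1 - w))
      {w | 0 < σ * w.im} {z | σ * z.im < 0} := by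
  have hm' : (m : ℂ) ≠ 0 := ofReal_ne_zero.mpr hm.ne'
  have one_sub_ne {w : ℂ} (hw : 0 < σ * w.im) : 1 - w ≠ 0 := fun h => by
    simp [← sub_eq_zero.mp h] at hw
  have sub_ne {z : ℂ} (hz : σ * z.im < 0) : z - m ≠ 0 := fun h => by
    simp [sub_eq_zero.mp h] at hz
  refine InvOn.bijOn (f' := fun z : ℂ => (z + m) / (z - m)) ⟨fun w hw => ?_, fun z hz => ?_⟩
    (fun w hw => ?_) (fun z hz => ?_)
  · have hw1 := one_sub_ne hw
    field_simp
    ring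
  · have hzm := sub_ne hz
    have h2m : z - m - (z + m) ≠ 0 := by
      rw [show z - m - (z + m) = -(2 * m) by ring]
      simpa using hm'
    field_simp
    ring
  · change σ * (-(m : ℂ) * (1 + w) / (1 - w)).im < 0
    have hN := normSq_pos.mpr (one_sub_ne hw)
    rw [im_neg_mul_one_add_div_one_sub, mul_div_assoc', div_neg_iff]
    exact Or.inr ⟨by nlinarith [mul_pos hm (show 0 < σ * w.im from hw)], hN⟩
  · change 0 < σ * ((z + m) / (z - m)).im
    have hN := normSq_pos.mpr (sub_ne hz)
    rw [im_add_div_sub, mul_div_assoc']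
    exact div_pos (by nlinarith [mul_pos hm (neg_pos.mpr (show σ * z.im < 0 from hz))]) hN

theorem z_neg_m_bijOn_quarter_plane_general (m σ : ℝ) (hm : 0 < m) :
    Set.BijOn (fun k : ℂ => -(m : ℂ) * (1 + k ^ 2) / (1 - k ^ 2))
      {k : ℂ | 0 < k.re ∧ 0 < σ * k.im}
      {z : ℂ | σ * z.im < 0}
    ∧ ∀ z : ℂ, 0 < z.im →
        ∃! k : ℂ, (0 < k.re ∧ k.im < 0)
          ∧ z = -(m : ℂ) * (1 + k ^ 2) / (1 - k ^ 2) := by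
  have bij (σ : ℝ) : BijOn (fun k : ℂ => -(m : ℂ) * (1 + k ^ 2) / (1 - k ^ 2))
      {k | 0 < k.re ∧ 0 < σ * k.im} {z | σ * z.im < 0} :=
    (bijOn_neg_mul_one_add_div_one_sub_halfPlane m σ hm).comp (bijOn_sq_quarterPlane σ)
  have lower : BijOn (fun k : ℂ => -(m : ℂ) * (1 + k ^ 2) / (1 - k ^ 2))
      {k | 0 < k.re ∧ k.im < 0} {z | 0 < z.im} := by
    simpa only [neg_one_mul, neg_pos, neg_lt_zero] using bij (-1)
  exact ⟨bij σ, fun z hz => lower.existsUnique_eq hz⟩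

/-- For `m > 0` and `σ ∈ {+1, -1}`, the map
`k ↦ z_{-m}(k) = -m(1 + k²)/(1 - k²)` is a bijection from the open quarter-plane
`{k : Re k > 0, σ·Im k > 0}` onto the half-plane `{z : σ·Im z < 0}`.  In particular,
every `z` with `Im z > 0` equals `z_{-m}(k)` for a unique `k` with `Re k > 0`,
`Im k < 0`. -/
theorem z_neg_m_bijOn_quarter_plane (m σ : ℝ) (hm : 0 < m) (hσ : σ = 1 ∨ σ = -1) :
    Set.BijOn (fun k : ℂ => -(m : ℂ) * (1 + k ^ 2) / (1 - k ^ 2))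
      {k : ℂ | 0 < k.re ∧ 0 < σ * k.im}
      {z : ℂ | σ * z.im < 0}
    ∧ ∀ z : ℂ, 0 < z.im →
        ∃! k : ℂ, (0 < k.re ∧ k.im < 0)
          ∧ z = -(m : ℂ) * (1 + k ^ 2) / (1 - k ^ 2) :=
  z_neg_m_bijOn_quarter_plane_general m σ hm
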